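/- arXiv:1503.04745 — 2 statements merged into one kernel-verified Lean document; each statement's English description precedes it below -/
import Mathlib

section
/- Let k ≥ 1 and let a_0 < b_0 ≤ a_1 < b_1 ≤ ⋯ ≤ a_{k−1} < b_{k−1} be natural numbers, and let x̂ = Σ_{i<k} (d_{b_i} − d_{a_i}) be the indicator sequence of the union of the k intervals (a_i, b_i]. Then ‖x̂‖_J ≤ √k. -/
open Filter

/-- The set of candidate values whose supremum (times `1/√2`) defines the James norm. -/
def jamesSet (x : ℕ → ℝ) : Set ℝ :=
  {r : ℝ | ∃ (m : ℕ) (p : Fin (m + 1) → ℕ), StrictMono p ∧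
    r = Real.sqrt ((∑ i : Fin m, (x (p i.castSucc) - x (p i.succ)) ^ 2)
      + (x (p (Fin.last m)) - x (p 0)) ^ 2)}

/-- The James norm of a sequence. -/
noncomputable def jamesNorm (x : ℕ → ℝ) : ℝ :=
  (Real.sqrt 2)⁻¹ * sSup (jamesSet x)

/-- If `x̂` is the indicator sequence of the union of `k` intervals
`(a_0, b_0], (a_1, b_1], …, (a_{k−1}, b_{k−1}]` with
`a_0 < b_0 ≤ a_1 < b_1 ≤ ⋯ ≤ a_{k−1} < b_{k−1}`, then `‖x̂‖_J ≤ √k`. -/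
theorem james_norm_of_interval_indicator (k : ℕ) (hk : 1 ≤ k) (a b : ℕ → ℕ)
    (hab : ∀ i < k, a i < b i) (hba : ∀ i, i + 1 < k → b i ≤ a (i + 1)) :
    jamesNorm ((⋃ i ∈ Finset.range k, Set.Ioc (a i) (b i)).indicator
        (fun _ => (1 : ℝ))) ≤ Real.sqrt k := by
  classical
  set s : Set ℕ := ⋃ i ∈ Finset.range k, Set.Ioc (a i) (b i) with hs
  set x : ℕ → ℝ := s.indicator (fun _ => (1 : ℝ)) with hxdef
  have hx01 : ∀ n, x n = 0 ∨ x n = 1 := by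
    intro n
    by_cases h : n ∈ s
    · right; simp [hxdef, Set.indicator_of_mem h]
    · left; simp [hxdef, Set.indicator_of_notMem h]
  have hx1 : ∀ n, x n = 1 ↔ n ∈ s := by
    intro n
    by_cases h : n ∈ s <;>
      simp [hxdef, Set.indicator_of_mem, Set.indicator_of_notMem, h]
  have hmem : ∀ n, n ∈ s ↔ ∃ j, j < k ∧ n ∈ Set.Ioc (a j) (b j) := by
    intro n
    simp [hs, Set.mem_iUnion, Finset.mem_range]; tauto
  -- choice of interval containing a point of s
  let g : ℕ → ℕ := fun n =>
    if h : ∃ j, j < k ∧ n ∈ Set.Ioc (a j) (b j) then h.choose else 0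
  have hg : ∀ n ∈ s, g n < k ∧ n ∈ Set.Ioc (a (g n)) (b (g n)) := by
    intro n hn
    have h : ∃ j, j < k ∧ n ∈ Set.Ioc (a j) (b j) := (hmem n).1 hn
    simp only [g, dif_pos h]
    exact ⟨h.choose_spec.1, h.choose_spec.2⟩
  have key : ∀ r ∈ jamesSet x, r ≤ Real.sqrt (2 * k) := by
    rintro r ⟨m, p, hp, rfl⟩
    have hle : ∀ i i' : Fin (m + 1), i ≤ i' → p i ≤ p i' := fun i i' h => hp.monotone h
    -- cyclic rewriting of the sum
    have hsum : (∑ i : Fin m, (x (p i.castSucc) - x (p i.succ)) ^ 2)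
        + (x (p (Fin.last m)) - x (p 0)) ^ 2
        = ∑ i : Fin (m + 1), (x (p i) - x (p (i + 1))) ^ 2 := by
      rw [Fin.sum_univ_castSucc]
      congr 1
      · exact Finset.sum_congr rfl fun j _ => by rw [Fin.coeSucc_eq_succ]
      · rw [Fin.last_add_one]
    rw [hsum]
    set P : Fin (m + 1) → Prop := fun i => x (p i) ≠ x (p (i + 1)) with hP
    have hterm : ∀ i : Fin (m + 1),
        (x (p i) - x (p (i + 1))) ^ 2 = if P i then 1 else 0 := by
      intro i
      rcases hx01 (p i) with h1 | h1 <;> rcases hx01 (p (i + 1)) with h2 | h2 <;>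
        simp [hP, h1, h2]
    have hcardsum : ∑ i : Fin (m + 1), (x (p i) - x (p (i + 1))) ^ 2
        = ((Finset.univ.filter P).card : ℝ) := by
      rw [Finset.sum_congr rfl fun i _ => hterm i, Finset.sum_boole]
    set U := Finset.univ.filter (fun i : Fin (m + 1) => x (p i) = 0 ∧ x (p (i + 1)) = 1)
      with hU
    set D := Finset.univ.filter (fun i : Fin (m + 1) => x (p i) = 1 ∧ x (p (i + 1)) = 0)
      with hD
    have hsub : Finset.univ.filter P ⊆ U ∪ D := by
      intro i hi
      simp only [Finset.mem_filter, Finset.mem_univ, true_and] at hi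
      simp only [hU, hD, Finset.mem_union, Finset.mem_filter, Finset.mem_univ, true_and]
      rcases hx01 (p i) with h1 | h1 <;> rcases hx01 (p (i + 1)) with h2 | h2 <;>
        simp [hP, h1, h2] at hi ⊢
    -- successor facts
    have hsucc : ∀ i : Fin (m + 1), i < Fin.last m → ((i + 1 : Fin (m + 1)) : ℕ) = i + 1 :=
      fun i h => Fin.val_add_one_of_lt h
    have hUcard : U.card ≤ k := by
      have hmaps : ∀ i ∈ U, g (p (i + 1)) ∈ Finset.range k := by
        intro i hi
        simp only [hU, Finset.mem_filter, Finset.mem_univ, true_and] at hi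
        exact Finset.mem_range.2 (hg _ ((hx1 _).1 hi.2)).1
      have main : ∀ i i' : Fin (m + 1), i ∈ U → i' ∈ U →
          g (p (i + 1)) = g (p (i' + 1)) → i < i' → False := by
        intro i i' hi hi' hgg hlt
        simp only [hU, Finset.mem_filter, Finset.mem_univ, true_and] at hi hi'
        set j := g (p (i + 1)) with hj
        obtain ⟨hjk, hji⟩ := hg _ ((hx1 _).1 hi.2)
        obtain ⟨hjk', hji'⟩ := hg _ ((hx1 _).1 hi'.2)
        rw [← hgg] at hji'
        have hilast : i < Fin.last m := lt_of_lt_of_le hlt (Fin.le_last i')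
        have hstep : p i < p (i + 1) := by
          apply hp
          rw [Fin.lt_iff_val_lt_val, hsucc i hilast]; omega
        by_cases hlast : i' = Fin.last m
        · -- wrap edge: p (i'+1) = p 0 ∈ Ioc, squeeze p i
          rw [hlast, Fin.last_add_one] at hji'
          have h1 : a j < p i := lt_of_lt_of_le hji'.1 (hle 0 i (Fin.zero_le i))
          have h2 : p i ≤ b j := le_of_lt (lt_of_lt_of_le hstep hji.2)
          have : x (p i) = 1 := (hx1 _).2 ((hmem _).2 ⟨j, hjk, h1, h2⟩)
          rw [hi.1] at this; norm_num at this
        · -- both linear: squeeze p i'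
          have hilast' : i' < Fin.last m :=
            lt_of_le_of_ne (Fin.le_last i') hlast
          have hle1 : p (i + 1) ≤ p i' := by
            apply hle
            rw [Fin.le_iff_val_le_val, hsucc i hilast]
            exact Fin.lt_iff_val_lt_val.1 hlt
          have hstep' : p i' < p (i' + 1) := by
            apply hp
            rw [Fin.lt_iff_val_lt_val, hsucc i' hilast']; omega
          have h1 : a j < p i' := lt_of_lt_of_le hji.1 hle1
          have h2 : p i' ≤ b j := le_of_lt (lt_of_lt_of_le hstep' hji'.2)
          have : x (p i') = 1 := (hx1 _).2 ((hmem _).2 ⟨j, hjk, h1, h2⟩)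
          rw [hi'.1] at this; norm_num at this
      have hinj : Set.InjOn (fun i => g (p (i + 1))) U := by
        intro i hi i' hi' hgg
        by_contra hne
        rcases lt_or_gt_of_ne hne with h | h
        · exact main i i' hi hi' hgg h
        · exact main i' i hi' hi hgg.symm h
      calc U.card ≤ (Finset.range k).card := Finset.card_le_card_of_injOn _ hmaps hinj
        _ = k := Finset.card_range k
    have hDcard : D.card ≤ k := by
      have hmaps : ∀ i ∈ D, g (p i) ∈ Finset.range k := by
        intro i hi
        simp only [hD, Finset.mem_filter, Finset.mem_univ, true_and] at hi
        exact Finset.mem_range.2 (hg _ ((hx1 _).1 hi.1)).1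
      have main : ∀ i i' : Fin (m + 1), i ∈ D → i' ∈ D →
          g (p i) = g (p i') → i < i' → False := by
        intro i i' hi hi' hgg hlt
        simp only [hD, Finset.mem_filter, Finset.mem_univ, true_and] at hi hi'
        set j := g (p i) with hj
        obtain ⟨hjk, hji⟩ := hg _ ((hx1 _).1 hi.1)
        obtain ⟨hjk', hji'⟩ := hg _ ((hx1 _).1 hi'.1)
        rw [← hgg] at hji'
        have hilast : i < Fin.last m := lt_of_lt_of_le hlt (Fin.le_last i')
        have hstep : p i < p (i + 1) := by
          apply hp
          rw [Fin.lt_iff_val_lt_val, hsucc i hilast]; omega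
        have hle1 : p (i + 1) ≤ p i' := by
          apply hle
          rw [Fin.le_iff_val_le_val, hsucc i hilast]
          exact Fin.lt_iff_val_lt_val.1 hlt
        have h1 : a j < p (i + 1) := lt_of_le_of_lt (le_of_lt hji.1) hstep
        have h2 : p (i + 1) ≤ b j := le_trans hle1 hji'.2
        have : x (p (i + 1)) = 1 := (hx1 _).2 ((hmem _).2 ⟨j, hjk, h1, h2⟩)
        rw [hi.2] at this; norm_num at this
      have hinj : Set.InjOn (fun i => g (p i)) D := by
        intro i hi i' hi' hgg
        by_contra hne
        rcases lt_or_gt_of_ne hne with h | h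
        · exact main i i' hi hi' hgg h
        · exact main i' i hi' hi hgg.symm h
      calc D.card ≤ (Finset.range k).card := Finset.card_le_card_of_injOn _ hmaps hinj
        _ = k := Finset.card_range k
    have hcard : (Finset.univ.filter P).card ≤ 2 * k := by
      calc (Finset.univ.filter P).card ≤ (U ∪ D).card := Finset.card_le_card hsub
        _ ≤ U.card + D.card := Finset.card_union_le U D
        _ ≤ k + k := Nat.add_le_add hUcard hDcard
        _ = 2 * k := by ring
    apply Real.sqrt_le_sqrt
    rw [hcardsum]
    calc ((Finset.univ.filter P).card : ℝ) ≤ ((2 * k : ℕ) : ℝ) := by exact_mod_cast hcard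
      _ = 2 * (k : ℝ) := by push_cast; ring
  have hsup : sSup (jamesSet x) ≤ Real.sqrt (2 * k) :=
    Real.sSup_le key (Real.sqrt_nonneg _)
  have h2 : Real.sqrt 2 ≠ 0 := by positivity
  calc jamesNorm x = (Real.sqrt 2)⁻¹ * sSup (jamesSet x) := rfl
    _ ≤ (Real.sqrt 2)⁻¹ * Real.sqrt (2 * k) := by
        apply mul_le_mul_of_nonneg_left hsup (by positivity)
    _ = Real.sqrt k := by
        rw [Real.sqrt_mul (by norm_num) (k : ℝ), inv_mul_cancel_left₀ h2]
end

section
/- With the James-space construction below, one has 1/4 ≤ d*(d) ≤ B. -/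
open Filter MeasureTheory

/-- `d_n = Σ_{j≤n} e_j = (1,…,1,0,…)` with `n+1` leading ones. -/
def dSeq (n : ℕ) : ℕ → ℝ := fun j => if j ≤ n then 1 else 0

/-- `|x| = Σ_{i≤K} |γ*_i(x)|·ω_i`, the lattice absolute value induced by a basis
`ω` with coordinate functionals `γ`. -/
noncomputable def absVec (K : ℕ) (ω : Fin (K + 1) → ℕ → ℝ)
    (γ : Fin (K + 1) → (ℕ → ℝ) →ₗ[ℝ] ℝ) (x : ℕ → ℝ) : ℕ → ℝ :=
  ∑ i, |γ i x| • ω i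

/-- `d = Σ_{j≤K} 2^{−j−1}·|d_j|`. -/
noncomputable def dElt (K : ℕ) (ω : Fin (K + 1) → ℕ → ℝ)
    (γ : Fin (K + 1) → (ℕ → ℝ) →ₗ[ℝ] ℝ) : ℕ → ℝ :=
  ∑ j : Fin (K + 1), ((2 : ℝ) ^ ((j : ℕ) + 1))⁻¹ • absVec K ω γ (dSeq j)

/-- `d* = Σ_{j≤K} 2^{−j−1}·|e*_j|`, as a function on sequences; here
`|e*_j|(x) = Σ_{i≤K} γ*_i(x)·|e*_j(ω_i)| = Σ_{i≤K} γ*_i(x)·|ω_i(j)|`. -/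
noncomputable def dStar (K : ℕ) (ω : Fin (K + 1) → ℕ → ℝ)
    (γ : Fin (K + 1) → (ℕ → ℝ) →ₗ[ℝ] ℝ) (x : ℕ → ℝ) : ℝ :=
  ∑ j : Fin (K + 1), ((2 : ℝ) ^ ((j : ℕ) + 1))⁻¹ * (∑ i, γ i x * |ω i (j : ℕ)|)

/-- The probability measure on `Ω = {0,…,K}` given by
`μ({i}) = γ*_i(d)·d*(ω_i)/d*(d)`. -/
noncomputable def jMeasure (K : ℕ) (ω : Fin (K + 1) → ℕ → ℝ)
    (γ : Fin (K + 1) → (ℕ → ℝ) →ₗ[ℝ] ℝ) : Measure (Fin (K + 1)) :=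
  ∑ i : Fin (K + 1),
    (ENNReal.ofReal (γ i (dElt K ω γ) * dStar K ω γ (ω i) / dStar K ω γ (dElt K ω γ))) •
      Measure.dirac i

/-- The embedding `π : J_K → L¹(Ω,μ)`, `π(x)(i) = (d*(d)/γ*_i(d))·γ*_i(x)`. -/
noncomputable def jPi (K : ℕ) (ω : Fin (K + 1) → ℕ → ℝ)
    (γ : Fin (K + 1) → (ℕ → ℝ) →ₗ[ℝ] ℝ) (x : ℕ → ℝ) : Fin (K + 1) → ℝ :=
  fun i => (dStar K ω γ (dElt K ω γ) / γ i (dElt K ω γ)) * γ i x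

/-- The embedding `π* : J_K* → L¹(Ω,μ)`, `π*(x*)(i) = (d*(d)/d*(ω_i))·x*(ω_i)`. -/
noncomputable def jPiStar (K : ℕ) (ω : Fin (K + 1) → ℕ → ℝ)
    (γ : Fin (K + 1) → (ℕ → ℝ) →ₗ[ℝ] ℝ) (f : (ℕ → ℝ) →ₗ[ℝ] ℝ) : Fin (K + 1) → ℝ :=
  fun i => (dStar K ω γ (dElt K ω γ) / dStar K ω γ (ω i)) * f (ω i)


/-!
Write `c_j = 2^{-j-1}` and `a_{j'j} = Σ_i |γ*_i(d_{j'})|·|ω_i(j)|`. Since `γ*_i(|x|) = |γ*_i(x)|`,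
`d*(d) = Σ_j c_j Σ_{j'} c_{j'} a_{j'j}`. Flipping the signs of the coefficients of `d_{j'}` so that
all summands of its `j`-th coordinate become nonnegative shows that `a_{j'j}` is a coordinate of a
sign change of `d_{j'}`, hence `a_{j'j} ≤ B‖d_{j'}‖_J = B`; as `Σ c_j ≤ 1`, `d*(d) ≤ B`. From
below, `a_{00} ≥ |d_0(0)| = 1`, so `d*(d) ≥ c_0² = 1/4`.
-/

lemma Fin.sum_castSucc_sub_succ {M : Type*} [AddCommGroup M] {m : ℕ} (f : Fin (m + 1) → M) :
    ∑ i : Fin m, (f i.castSucc - f i.succ) = f 0 - f (Fin.last m) := by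
  rw [Finset.sum_sub_distrib, sub_eq_sub_iff_add_eq_add]
  exact (Fin.sum_univ_castSucc f).symm.trans (Fin.sum_univ_succ f)

lemma cyclic_sum_sq_sub_le {m : ℕ} (a : Fin (m + 1) → ℝ) :
    (∑ i : Fin m, (a i.castSucc - a i.succ) ^ 2) + (a (Fin.last m) - a 0) ^ 2
      ≤ 4 * ∑ k, a k ^ 2 := by
  have hcast := Fin.sum_univ_castSucc (fun k => a k ^ 2)
  have hsucc := Fin.sum_univ_succ (fun k => a k ^ 2)
  have hterm : ∀ i : Fin m, (a i.castSucc - a i.succ) ^ 2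
      ≤ 2 * a i.castSucc ^ 2 + 2 * a i.succ ^ 2 :=
    fun i => by nlinarith [sq_nonneg (a i.castSucc + a i.succ)]
  have hsum := Finset.sum_le_sum fun i (_ : i ∈ Finset.univ) => hterm i
  rw [Finset.sum_add_distrib, ← Finset.mul_sum, ← Finset.mul_sum] at hsum
  nlinarith [sq_nonneg (a (Fin.last m) + a 0)]

lemma sum_sq_comp_strictMono_le {K m : ℕ} {x : ℕ → ℝ} (hx : ∀ n, K < n → x n = 0)
    {p : Fin (m + 1) → ℕ} (hp : StrictMono p) :
    ∑ k, x (p k) ^ 2 ≤ ∑ n ∈ Finset.range (K + 1), x n ^ 2 := by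
  classical
  rw [← Finset.sum_image (f := fun n => x n ^ 2) fun a _ b _ h => hp.injective h]
  calc ∑ n ∈ Finset.univ.image p, x n ^ 2
      ≤ ∑ n ∈ Finset.range (K + 1) ∪ Finset.univ.image p, x n ^ 2 :=
        Finset.sum_le_sum_of_subset_of_nonneg Finset.subset_union_right
          fun _ _ _ => sq_nonneg _
    _ = ∑ n ∈ Finset.range (K + 1), x n ^ 2 := by
        refine (Finset.sum_subset Finset.subset_union_left fun n _ hn => ?_).symm
        rw [hx n (by simpa using hn), sq, zero_mul]

lemma jamesSet_bddAbove {K : ℕ} {x : ℕ → ℝ} (hx : ∀ n, K < n → x n = 0) :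
    BddAbove (jamesSet x) := by
  refine ⟨Real.sqrt (4 * ∑ n ∈ Finset.range (K + 1), x n ^ 2), ?_⟩
  rintro r ⟨m, p, hp, rfl⟩
  gcongr
  calc _ ≤ 4 * ∑ k, x (p k) ^ 2 := cyclic_sum_sq_sub_le fun k => x (p k)
    _ ≤ _ := by grw [sum_sq_comp_strictMono_le hx hp]

lemma abs_le_jamesNorm {K : ℕ} {x : ℕ → ℝ} (hx : ∀ n, K < n → x n = 0) (j : ℕ) :
    |x j| ≤ jamesNorm x := by
  have hmem : Real.sqrt 2 * |x j| ∈ jamesSet x := by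
    refine ⟨1, ![j, j + K + 1], ?_, ?_⟩
    · simp [Fin.strictMono_iff_lt_succ]
    · simp [hx (j + K + 1) (by omega), ← two_mul, Real.sqrt_mul, Real.sqrt_sq_eq_abs]
  rw [jamesNorm, le_inv_mul_iff₀ (by positivity)]
  exact le_csSup (jamesSet_bddAbove hx) hmem

lemma jamesNorm_le_one_of_antitone {x : ℕ → ℝ} (hx : Antitone x) (h0 : ∀ n, 0 ≤ x n)
    (h1 : ∀ n, x n ≤ 1) : jamesNorm x ≤ 1 := by
  rw [jamesNorm, inv_mul_le_iff₀ (by positivity), mul_one]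
  refine Real.sSup_le ?_ (Real.sqrt_nonneg 2)
  rintro r ⟨m, p, hp, rfl⟩
  gcongr
  have hdiff : ∀ i : Fin m, 0 ≤ x (p i.castSucc) - x (p i.succ) :=
    fun i => sub_nonneg.2 (hx (hp Fin.castSucc_lt_succ).le)
  have htel := Fin.sum_castSucc_sub_succ (x ∘ p)
  have hsq := Finset.sum_sq_le_sq_sum_of_nonneg fun i (_ : i ∈ Finset.univ) => hdiff i
  simp only [Function.comp_apply] at htel
  rw [htel] at hsq
  nlinarith [h0 (p 0), h1 (p 0), h0 (p (Fin.last m)), h1 (p (Fin.last m))]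

lemma dSeq_eq_zero {n j : ℕ} (h : n < j) : dSeq n j = 0 := if_neg (by omega)

lemma jamesNorm_dSeq (n : ℕ) : jamesNorm (dSeq n) = 1 := by
  refine le_antisymm (jamesNorm_le_one_of_antitone ?_ ?_ ?_) ?_
  · intro a b hab
    unfold dSeq
    split_ifs <;> first | omega | norm_num
  · intro j; unfold dSeq; split_ifs <;> norm_num
  · intro j; unfold dSeq; split_ifs <;> norm_num
  · simpa [dSeq] using abs_le_jamesNorm (fun _ => dSeq_eq_zero) 0

lemma sum_geometric_weights_le_one (K : ℕ) :
    ∑ j : Fin (K + 1), ((2 : ℝ) ^ ((j : ℕ) + 1))⁻¹ ≤ 1 := by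
  rw [Fin.sum_univ_eq_sum_range (fun j => ((2 : ℝ) ^ (j + 1))⁻¹)]
  have := sum_geometric_two_le (K + 1)
  calc ∑ j ∈ Finset.range (K + 1), ((2 : ℝ) ^ (j + 1))⁻¹
      = 1 / 2 * ∑ j ∈ Finset.range (K + 1), (1 / (2 : ℝ)) ^ j := by
        rw [Finset.mul_sum]; congr 1 with j; rw [one_div, inv_pow, pow_succ, mul_inv]; ring
    _ ≤ 1 := by linarith

lemma geometric_weighted_sum_le {K : ℕ} {f : Fin (K + 1) → ℝ} {B : ℝ} (hB : 0 ≤ B)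
    (hf : ∀ j, f j ≤ B) : ∑ j : Fin (K + 1), ((2 : ℝ) ^ ((j : ℕ) + 1))⁻¹ * f j ≤ B :=
  calc _ ≤ ∑ j : Fin (K + 1), ((2 : ℝ) ^ ((j : ℕ) + 1))⁻¹ * B := by gcongr with j; exact hf j
    _ = (∑ j : Fin (K + 1), ((2 : ℝ) ^ ((j : ℕ) + 1))⁻¹) * B := Finset.sum_mul .. |>.symm
    _ ≤ 1 * B := by gcongr; exact sum_geometric_weights_le_one K
    _ = B := one_mul B

lemma half_le_geometric_weighted_sum {K : ℕ} {f : Fin (K + 1) → ℝ} (hf : ∀ j, 0 ≤ f j) :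
    f 0 / 2 ≤ ∑ j : Fin (K + 1), ((2 : ℝ) ^ ((j : ℕ) + 1))⁻¹ * f j := by
  have := Finset.single_le_sum (f := fun j : Fin (K + 1) => ((2 : ℝ) ^ ((j : ℕ) + 1))⁻¹ * f j)
    (fun j _ => mul_nonneg (by positivity) (hf j)) (Finset.mem_univ 0)
  simpa [div_eq_inv_mul] using this

section Basis

variable {K : ℕ} {ω : Fin (K + 1) → ℕ → ℝ} {γ : Fin (K + 1) → (ℕ → ℝ) →ₗ[ℝ] ℝ}

lemma sum_abs_mul_abs_le_of_unconditional {B : ℝ} (hω_supp : ∀ i, ∀ j, K < j → ω i j = 0)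
    (hunc : ∀ (α ε : Fin (K + 1) → ℝ), (∀ i, ε i = 1 ∨ ε i = -1) →
      jamesNorm (∑ i, (ε i * α i) • ω i) ≤ B * jamesNorm (∑ i, α i • ω i))
    (α : Fin (K + 1) → ℝ) (j : ℕ) :
    ∑ i, |α i| * |ω i j| ≤ B * jamesNorm (∑ i, α i • ω i) := by
  set ε : Fin (K + 1) → ℝ := fun i => if 0 ≤ α i * ω i j then 1 else -1
  have hε : ∀ i, ε i = 1 ∨ ε i = -1 := fun i => by unfold ε; split_ifs <;> simp
  have hsigned : ∀ i, |α i| * |ω i j| = ε i * α i * ω i j := fun i => by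
    unfold ε; split_ifs with h
    · rw [one_mul, ← abs_mul, abs_of_nonneg h]
    · rw [neg_one_mul, neg_mul, ← abs_mul, abs_of_neg (not_le.1 h)]
  calc ∑ i, |α i| * |ω i j| = (∑ i, (ε i * α i) • ω i) j := by
        simp [Finset.sum_apply, hsigned]
    _ ≤ |(∑ i, (ε i * α i) • ω i) j| := le_abs_self _
    _ ≤ jamesNorm (∑ i, (ε i * α i) • ω i) :=
        abs_le_jamesNorm (K := K) (fun n hn => by simp [Finset.sum_apply, hω_supp _ _ hn]) j
    _ ≤ B * jamesNorm (∑ i, α i • ω i) := hunc α ε hε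

lemma abs_apply_le_sum_abs_mul_abs
    (hbasis : ∀ x : ℕ → ℝ, (∀ j, K < j → x j = 0) → (∑ i, γ i x • ω i) = x)
    {x : ℕ → ℝ} (hx : ∀ j, K < j → x j = 0) (j : ℕ) :
    |x j| ≤ ∑ i, |γ i x| * |ω i j| := by
  conv_lhs => rw [← hbasis x hx]
  simpa [Finset.sum_apply, abs_mul] using
    Finset.abs_sum_le_sum_abs (fun i => γ i x * ω i j) Finset.univ

lemma apply_absVec (hdual : ∀ i i' : Fin (K + 1), γ i (ω i') = if i = i' then 1 else 0)
    (x : ℕ → ℝ) (i : Fin (K + 1)) : γ i (absVec K ω γ x) = |γ i x| := by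
  simp [absVec, map_sum, hdual]

lemma dStar_dElt_eq (hdual : ∀ i i' : Fin (K + 1), γ i (ω i') = if i = i' then 1 else 0) :
    dStar K ω γ (dElt K ω γ) = ∑ j : Fin (K + 1), ((2 : ℝ) ^ ((j : ℕ) + 1))⁻¹ *
      ∑ j' : Fin (K + 1), ((2 : ℝ) ^ ((j' : ℕ) + 1))⁻¹ * ∑ i, |γ i (dSeq j')| * |ω i j| := by
  simp only [dStar, dElt, map_sum, map_smul, apply_absVec hdual, smul_eq_mul, Finset.sum_mul,
    Finset.mul_sum, mul_assoc]
  congr 1 with j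
  exact Finset.sum_comm

end Basis

theorem dStar_dElt_bounds_general
    (K : ℕ) (B : ℝ)
    (ω : Fin (K + 1) → ℕ → ℝ) (γ : Fin (K + 1) → (ℕ → ℝ) →ₗ[ℝ] ℝ)
    (hω_supp : ∀ i, ∀ j, K < j → ω i j = 0)
    (hbasis : ∀ x : ℕ → ℝ, (∀ j, K < j → x j = 0) → (∑ i, γ i x • ω i) = x)
    (hdual : ∀ i i' : Fin (K + 1), γ i (ω i') = if i = i' then 1 else 0)
    (hunc : ∀ (α ε : Fin (K + 1) → ℝ), (∀ i, ε i = 1 ∨ ε i = -1) →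
      jamesNorm (∑ i, (ε i * α i) • ω i) ≤ B * jamesNorm (∑ i, α i • ω i))
    : 1 / 4 ≤ dStar K ω γ (dElt K ω γ) ∧ dStar K ω γ (dElt K ω γ) ≤ B := by
  have hsupp (j' : Fin (K + 1)) : ∀ j, K < j → dSeq j' j = 0 :=
    fun _ h => dSeq_eq_zero (by omega)
  have ha_le (j' : Fin (K + 1)) (j : ℕ) : ∑ i, |γ i (dSeq j')| * |ω i j| ≤ B := by
    simpa [hbasis _ (hsupp j'), jamesNorm_dSeq] using
      sum_abs_mul_abs_le_of_unconditional hω_supp hunc (fun i => γ i (dSeq j')) j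
  have ha₀₀ : 1 ≤ ∑ i, |γ i (dSeq 0)| * |ω i 0| := by
    simpa [dSeq] using abs_apply_le_sum_abs_mul_abs hbasis (hsupp 0) 0
  have hB : 0 ≤ B := zero_le_one.trans (ha₀₀.trans (ha_le 0 0))
  rw [dStar_dElt_eq hdual]
  constructor
  · have hinner := half_le_geometric_weighted_sum
      (f := fun j' : Fin (K + 1) => ∑ i, |γ i (dSeq j')| * |ω i 0|) fun _ => by positivity
    have houter := half_le_geometric_weighted_sum (f := fun j : Fin (K + 1) =>
      ∑ j' : Fin (K + 1), ((2 : ℝ) ^ ((j' : ℕ) + 1))⁻¹ * ∑ i, |γ i (dSeq j')| * |ω i j|)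
      fun _ => by positivity
    simp only [Fin.val_zero] at hinner houter
    linarith
  · exact geometric_weighted_sum_le hB fun j => geometric_weighted_sum_le hB fun j' => ha_le j' j

/-- With the James-space construction, `1/4 ≤ d*(d) ≤ B`. -/
theorem dStar_dElt_bounds
    (K : ℕ) (B : ℝ) (hB : 1 ≤ B)
    (ω : Fin (K + 1) → ℕ → ℝ) (γ : Fin (K + 1) → (ℕ → ℝ) →ₗ[ℝ] ℝ)
    (hω_supp : ∀ i, ∀ j, K < j → ω i j = 0)
    (hγ_supp : ∀ i, ∀ x : ℕ → ℝ, (∀ j, j ≤ K → x j = 0) → γ i x = 0)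
    (hbasis : ∀ x : ℕ → ℝ, (∀ j, K < j → x j = 0) → (∑ i, γ i x • ω i) = x)
    (hdual : ∀ i i' : Fin (K + 1), γ i (ω i') = if i = i' then 1 else 0)
    (hunc : ∀ (α ε : Fin (K + 1) → ℝ), (∀ i, ε i = 1 ∨ ε i = -1) →
      jamesNorm (∑ i, (ε i * α i) • ω i) ≤ B * jamesNorm (∑ i, α i • ω i))
    : 1 / 4 ≤ dStar K ω γ (dElt K ω γ) ∧ dStar K ω γ (dElt K ω γ) ≤ B :=
  dStar_dElt_bounds_general K B ω γ hω_supp hbasis hdual hunc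
end
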